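/- Under the setup of the alternating minimization for F(X1, C, B, D) = ‖(A1 − X1) ⊙ W1‖_F² + ‖A2 − X1C − BD‖_F² (sequences (X1)_p, C_p, B_p, D_p satisfying the first-order stationarity equations, m_p = F((X1)_p, C_p, B_p, D_p)), assume Σ_{p=1}^∞ √(m_p − m_{p+1}) < ∞. If there exists γ > 0 such that B_pᵀB_p ≥ γ·I_{r−k} (in the positive semidefinite order) for all sufficiently large p, then lim_{p→∞} D_p exists. -/

import Mathlib

/-!
By the stationarity equations every update of the alternating minimization removes from the
residual a component orthogonal (for the Frobenius inner product) to what remains, so by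
Pythagoras `m_p - m_{p+1}` is exactly the sum of the squared Frobenius norms of the five
increments. In particular `γ ‖D_{p+1} - D_p‖² ≤ ‖B_{p+1} (D_{p+1} - D_p)‖² ≤ m_p - m_{p+1}`, so
the increments of `D_p` are bounded by the summable sequence `√(m_p - m_{p+1}) / √γ` and
`(D_p)` is a Cauchy sequence.
-/

open Matrix Filter Topology

noncomputable def frob {α β : Type*} [Fintype α] [Fintype β] (M : Matrix α β ℝ) : ℝ :=
  Real.sqrt (∑ i, ∑ j, (M i j) ^ 2)

noncomputable def projCol {m k : ℕ} (B : Matrix (Fin m) (Fin k) ℝ) :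
    Matrix (Fin m) (Fin m) ℝ :=
  B * (Bᵀ * B)⁻¹ * Bᵀ

section Frobenius

variable {α β η : Type*} [Fintype α] [Fintype β] [Fintype η]

noncomputable def frobInner (M N : Matrix α β ℝ) : ℝ := ∑ i, ∑ j, M i j * N i j

theorem frob_sq (M : Matrix α β ℝ) : frob M ^ 2 = frobInner M M := by
  rw [frob, Real.sq_sqrt (by positivity)]
  simp only [frobInner, sq]

theorem frob_nonneg (M : Matrix α β ℝ) : 0 ≤ frob M := Real.sqrt_nonneg _

theorem abs_apply_le_frob (M : Matrix α β ℝ) (i : α) (j : β) : |M i j| ≤ frob M :=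
  Real.abs_le_sqrt <| (Finset.single_le_sum (f := fun j' => M i j' ^ 2)
    (fun _ _ => sq_nonneg _) (Finset.mem_univ j)).trans <|
    Finset.single_le_sum (f := fun i' => ∑ j', M i' j' ^ 2)
      (fun _ _ => by positivity) (Finset.mem_univ i)

theorem frobInner_comm (M N : Matrix α β ℝ) : frobInner M N = frobInner N M := by
  simp only [frobInner, mul_comm]

theorem frobInner_eq_trace (M N : Matrix α β ℝ) : frobInner M N = trace (Mᵀ * N) := by
  simp only [frobInner, trace, diag, mul_apply, transpose_apply]
  exact Finset.sum_comm

theorem frobInner_mul_left (A : Matrix α η ℝ) (B : Matrix η β ℝ) (M : Matrix α β ℝ) :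
    frobInner (A * B) M = frobInner B (Aᵀ * M) := by
  rw [frobInner_eq_trace, frobInner_eq_trace, transpose_mul, Matrix.mul_assoc]

theorem frobInner_mul_right (A : Matrix α η ℝ) (B : Matrix η β ℝ) (M : Matrix α β ℝ) :
    frobInner (A * B) M = frobInner A (M * Bᵀ) := by
  rw [frobInner_eq_trace, frobInner_eq_trace, transpose_mul, Matrix.mul_assoc,
    trace_mul_comm, Matrix.mul_assoc]

theorem frobInner_hadamard (M N W : Matrix α β ℝ) :
    frobInner (M ⊙ W) (N ⊙ W) = frobInner (M ⊙ W ⊙ W) N := by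
  simp only [frobInner, hadamard_apply]
  exact Finset.sum_congr rfl fun _ _ => Finset.sum_congr rfl fun _ _ => by ring

theorem frobInner_zero_right (M : Matrix α β ℝ) : frobInner M 0 = 0 := by
  simp [frobInner]

theorem frobInner_neg_left (M N : Matrix α β ℝ) : frobInner (-M) N = -frobInner M N := by
  simp [frobInner]

theorem frobInner_sub_right (M N N' : Matrix α β ℝ) :
    frobInner M (N - N') = frobInner M N - frobInner M N' := by
  simp only [frobInner, Matrix.sub_apply, mul_sub, Finset.sum_sub_distrib]

theorem frob_add_sq (U V : Matrix α β ℝ) :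
    frob (U + V) ^ 2 = frob U ^ 2 + 2 * frobInner U V + frob V ^ 2 := by
  simp only [frob_sq, frobInner, Matrix.add_apply, Finset.mul_sum, ← Finset.sum_add_distrib]
  exact Finset.sum_congr rfl fun _ _ => Finset.sum_congr rfl fun _ _ => by ring

theorem frob_add_sq_of_frobInner_eq_zero {U V : Matrix α β ℝ} (h : frobInner U V = 0) :
    frob (U + V) ^ 2 = frob U ^ 2 + frob V ^ 2 := by
  rw [frob_add_sq, h, mul_zero, add_zero]

theorem frobInner_mul_self_nonneg {P : Matrix η η ℝ} (hP : P.PosSemidef) (M : Matrix η β ℝ) :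
    0 ≤ frobInner M (P * M) := by
  have h : frobInner M (P * M) = ∑ j, (fun i => M i j) ⬝ᵥ P *ᵥ (fun i => M i j) := by
    simp only [frobInner, mul_apply, dotProduct, mulVec, Finset.mul_sum]
    exact Finset.sum_comm
  rw [h]
  exact Finset.sum_nonneg fun j _ => by simpa using hP.dotProduct_mulVec_nonneg (fun i => M i j)

theorem mul_frob_sq_le_frob_mul_sq [DecidableEq η] {γ : ℝ} {B : Matrix α η ℝ}
    (hB : (Bᵀ * B - γ • (1 : Matrix η η ℝ)).PosSemidef) (M : Matrix η β ℝ) :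
    γ * frob M ^ 2 ≤ frob (B * M) ^ 2 := by
  have h := frobInner_mul_self_nonneg hB M
  rw [Matrix.sub_mul, frobInner_sub_right, smul_mul, Matrix.one_mul, Matrix.mul_assoc,
    ← frobInner_mul_left] at h
  have : frobInner M (γ • M) = γ * frob M ^ 2 := by
    simp only [frob_sq, frobInner, Matrix.smul_apply, smul_eq_mul, Finset.mul_sum]
    exact Finset.sum_congr rfl fun _ _ => Finset.sum_congr rfl fun _ _ => by ring
  rw [frob_sq (B * M)]
  linarith

theorem exists_tendsto_of_frob_sub_le {D : ℕ → Matrix α β ℝ} {u : ℕ → ℝ} (hu : Summable u)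
    (N : ℕ) (h : ∀ p, N ≤ p → frob (D (p + 1) - D p) ≤ u p) :
    ∃ L, Tendsto D atTop (𝓝 L) := by
  let _ : NormedAddCommGroup (Matrix α β ℝ) := Matrix.normedAddCommGroup
  have hcauchy : CauchySeq fun n => D (n + N) := by
    refine cauchySeq_of_summable_dist (((summable_nat_add_iff N).2 hu).of_nonneg_of_le
      (fun _ => dist_nonneg) fun n => ?_)
    rw [dist_comm, dist_eq_norm, Nat.succ_add]
    refine ((norm_le_iff (frob_nonneg _)).2 fun i j => abs_apply_le_frob _ i j).trans ?_
    exact h _ (by omega)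
  obtain ⟨L, hL⟩ := cauchySeq_tendsto_of_complete hcauchy
  exact ⟨L, (tendsto_add_atTop_iff_nat N).1 hL⟩

end Frobenius

section AlternatingMinimization

variable {m k l s : Type*} [Fintype m] [Fintype k] [Fintype l] [Fintype s]

noncomputable def altMinObjective (A1 W1 : Matrix m k ℝ) (A2 : Matrix m l ℝ) (X : Matrix m k ℝ)
    (C : Matrix k l ℝ) (B : Matrix m s ℝ) (D : Matrix s l ℝ) : ℝ :=
  frob ((A1 - X) ⊙ W1) ^ 2 + frob (A2 - X * C - B * D) ^ 2

theorem altMinObjective_sub_eq {A1 W1 X X' : Matrix m k ℝ} {A2 : Matrix m l ℝ}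
    {C C' : Matrix k l ℝ} {B B' : Matrix m s ℝ} {D D' : Matrix s l ℝ}
    (h1 : (X' - A1) ⊙ W1 ⊙ W1 = (A2 - X' * C - B * D) * Cᵀ)
    (h2 : X'ᵀ * (A2 - X' * C' - B * D) = 0)
    (h3 : (A2 - X' * C' - B' * D) * Dᵀ = 0)
    (h4 : B'ᵀ * (A2 - X' * C' - B' * D') = 0) :
    altMinObjective A1 W1 A2 X C B D - altMinObjective A1 W1 A2 X' C' B' D' =
      frob ((X' - X) ⊙ W1) ^ 2 + frob ((X' - X) * C) ^ 2 + frob (X' * (C' - C)) ^ 2 +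
        frob ((B' - B) * D) ^ 2 + frob (B' * (D' - D)) ^ 2 := by
  set R1 := A2 - X' * C - B * D with hR1
  set R2 := A2 - X' * C' - B * D with hR2
  set R3 := A2 - X' * C' - B' * D with hR3
  set R4 := A2 - X' * C' - B' * D' with hR4
  have hW : (A1 - X) ⊙ W1 = (A1 - X') ⊙ W1 + (X' - X) ⊙ W1 := by
    rw [← add_hadamard, sub_add_sub_cancel]
  have hR0 : A2 - X * C - B * D = R1 + (X' - X) * C := by
    rw [hR1, Matrix.sub_mul]; abel
  -- the cross terms of the X-update cancel because `h1` says the X-gradient vanishes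
  have hcross : frobInner ((A1 - X') ⊙ W1) ((X' - X) ⊙ W1) + frobInner R1 ((X' - X) * C) = 0 := by
    have hneg : (A1 - X') ⊙ W1 ⊙ W1 = -((X' - A1) ⊙ W1 ⊙ W1) := by
      ext i j
      simp only [hadamard_apply, Matrix.sub_apply, Matrix.neg_apply]
      ring
    rw [frobInner_hadamard, hneg, frobInner_neg_left, h1, frobInner_mul_right,
      transpose_transpose, neg_add_cancel]
  have hC : frob R1 ^ 2 = frob R2 ^ 2 + frob (X' * (C' - C)) ^ 2 := by
    have hR : R1 = R2 + X' * (C' - C) := by rw [hR1, hR2, Matrix.mul_sub]; abel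
    rw [hR, frob_add_sq_of_frobInner_eq_zero]
    rw [frobInner_comm, frobInner_mul_left, h2, frobInner_zero_right]
  have hB : frob R2 ^ 2 = frob R3 ^ 2 + frob ((B' - B) * D) ^ 2 := by
    have hR : R2 = R3 + (B' - B) * D := by rw [hR2, hR3, Matrix.sub_mul]; abel
    rw [hR, frob_add_sq_of_frobInner_eq_zero]
    rw [frobInner_comm, frobInner_mul_right, h3, frobInner_zero_right]
  have hD : frob R3 ^ 2 = frob R4 ^ 2 + frob (B' * (D' - D)) ^ 2 := by
    have hR : R3 = R4 + B' * (D' - D) := by rw [hR3, hR4, Matrix.mul_sub]; abel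
    rw [hR, frob_add_sq_of_frobInner_eq_zero]
    rw [frobInner_comm, frobInner_mul_left, h4, frobInner_zero_right]
  simp only [altMinObjective]
  rw [hW, hR0, frob_add_sq, frob_add_sq, hC, hB, hD]
  linarith

theorem frob_mul_sub_sq_le_altMinObjective_sub {A1 W1 X X' : Matrix m k ℝ} {A2 : Matrix m l ℝ}
    {C C' : Matrix k l ℝ} {B B' : Matrix m s ℝ} {D D' : Matrix s l ℝ}
    (h1 : (X' - A1) ⊙ W1 ⊙ W1 = (A2 - X' * C - B * D) * Cᵀ)
    (h2 : X'ᵀ * (A2 - X' * C' - B * D) = 0)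
    (h3 : (A2 - X' * C' - B' * D) * Dᵀ = 0)
    (h4 : B'ᵀ * (A2 - X' * C' - B' * D') = 0) :
    frob (B' * (D' - D)) ^ 2 ≤
      altMinObjective A1 W1 A2 X C B D - altMinObjective A1 W1 A2 X' C' B' D' := by
  rw [altMinObjective_sub_eq h1 h2 h3 h4]
  exact le_add_of_nonneg_left (by positivity)

end AlternatingMinimization

theorem stmt_17_general
    {m k l s : ℕ}
    (A1 : Matrix (Fin m) (Fin k) ℝ) (A2 : Matrix (Fin m) (Fin l) ℝ)
    (W1 : Matrix (Fin m) (Fin k) ℝ)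
    (X1 : ℕ → Matrix (Fin m) (Fin k) ℝ) (C : ℕ → Matrix (Fin k) (Fin l) ℝ)
    (B : ℕ → Matrix (Fin m) (Fin s) ℝ) (D : ℕ → Matrix (Fin s) (Fin l) ℝ)
    (mseq : ℕ → ℝ)
    (hm : ∀ p, mseq p = frob (Matrix.hadamard (A1 - X1 p) W1) ^ 2 +
      frob (A2 - X1 p * C p - B p * D p) ^ 2)
    (heq1 : ∀ p, Matrix.hadamard (Matrix.hadamard (X1 (p + 1) - A1) W1) W1 =
      (A2 - X1 (p + 1) * C p - B p * D p) * (C p)ᵀ)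
    (heq2 : ∀ p, (X1 (p + 1))ᵀ * (A2 - X1 (p + 1) * C (p + 1) - B p * D p) = 0)
    (heq3 : ∀ p, (A2 - X1 (p + 1) * C (p + 1) - B (p + 1) * D p) * (D p)ᵀ = 0)
    (heq4 : ∀ p, (B (p + 1))ᵀ * (A2 - X1 (p + 1) * C (p + 1) - B (p + 1) * D (p + 1)) = 0)
    (hsum : Summable (fun p => Real.sqrt (mseq p - mseq (p + 1))))
    (γ : ℝ) (hγ : 0 < γ) (N : ℕ)
    (hB : ∀ p, N ≤ p → ((B p)ᵀ * B p - γ • (1 : Matrix (Fin s) (Fin s) ℝ)).PosSemidef)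
    :
    ∃ Ds : Matrix (Fin s) (Fin l) ℝ, Tendsto D atTop (nhds Ds) := by
  refine exists_tendsto_of_frob_sub_le (hsum.div_const (Real.sqrt γ)) N fun p hp => ?_
  have hstep : γ * frob (D (p + 1) - D p) ^ 2 ≤ mseq p - mseq (p + 1) := by
    rw [hm, hm]
    exact (mul_frob_sq_le_frob_mul_sq (hB (p + 1) (by omega)) _).trans
      (frob_mul_sub_sq_le_altMinObjective_sub (heq1 p) (heq2 p) (heq3 p) (heq4 p))
  rw [← Real.sqrt_div' _ hγ.le, ← abs_of_nonneg (frob_nonneg _)]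
  exact Real.abs_le_sqrt ((le_div_iff₀' hγ).2 hstep)

/-- **Theorem 4.4 (i).** If `Σ √(m_p − m_{p+1}) < ∞` and `B_pᵀB_p ≥ γ·I` (in the positive
semidefinite order) for all large `p` and some `γ > 0`, then `lim D_p` exists. -/
theorem stmt_17
    {m k l s : ℕ}
    (A1 : Matrix (Fin m) (Fin k) ℝ) (A2 : Matrix (Fin m) (Fin l) ℝ)
    (W1 : Matrix (Fin m) (Fin k) ℝ) (hW1 : ∀ i j, 0 < W1 i j)
    (X1 : ℕ → Matrix (Fin m) (Fin k) ℝ) (C : ℕ → Matrix (Fin k) (Fin l) ℝ)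
    (B : ℕ → Matrix (Fin m) (Fin s) ℝ) (D : ℕ → Matrix (Fin s) (Fin l) ℝ)
    (mseq : ℕ → ℝ)
    (hm : ∀ p, mseq p = frob (Matrix.hadamard (A1 - X1 p) W1) ^ 2 +
      frob (A2 - X1 p * C p - B p * D p) ^ 2)
    (heq1 : ∀ p, Matrix.hadamard (Matrix.hadamard (X1 (p + 1) - A1) W1) W1 =
      (A2 - X1 (p + 1) * C p - B p * D p) * (C p)ᵀ)
    (heq2 : ∀ p, (X1 (p + 1))ᵀ * (A2 - X1 (p + 1) * C (p + 1) - B p * D p) = 0)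
    (heq3 : ∀ p, (A2 - X1 (p + 1) * C (p + 1) - B (p + 1) * D p) * (D p)ᵀ = 0)
    (heq4 : ∀ p, (B (p + 1))ᵀ * (A2 - X1 (p + 1) * C (p + 1) - B (p + 1) * D (p + 1)) = 0)
    (hsum : Summable (fun p => Real.sqrt (mseq p - mseq (p + 1))))
    (γ : ℝ) (hγ : 0 < γ) (N : ℕ)
    (hB : ∀ p, N ≤ p → ((B p)ᵀ * B p - γ • (1 : Matrix (Fin s) (Fin s) ℝ)).PosSemidef)
    :
    ∃ Ds : Matrix (Fin s) (Fin l) ℝ, Tendsto D atTop (nhds Ds) :=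
  stmt_17_general A1 A2 W1 X1 C B D mseq hm heq1 heq2 heq3 heq4 hsum γ hγ N hB
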